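/- arXiv:1209.0253 — 3 statements merged into one kernel-verified Lean document; each statement's English description precedes it below -/
import Mathlib

section
/- If importance weights are defined by ω^k = p(y|x'^k) p(u^k) / (g(u^k|y, x^k) g(y|x^k)) with u^k drawn from g(u|y, x^k), x^k drawn from the resampling distribution proportional to g(y|x^j) π^j over atoms {x^j}, and x'^k = h(x^k, u^k), then E[ (Σ_j g(y|x^j) π^j) · ω^k ] = Σ_j p(y|x^j) π^j, where p(y|x) = ∫ p(y|h(x,u)) p(u) du. -/
/-!
The factor `1 / g(u|y, x̃)` in the weight cancels the second-stage proposal density under the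
integral, and the factor `1 / g(y|x̃)` cancels the first-stage resampling probability up to its
normalising constant `Σ_j g(y|x^j) π^j`, which is exactly the prefactor. What remains is the
mixture `Σ_j π^j ∫ p(y|h(x^j, u)) p(u) du`.
-/

open MeasureTheory Finset

theorem integral_div_mul_mul_self {α : Type*} [MeasurableSpace α] (μ : Measure α)
    (f q : α → ℝ) (c : ℝ) (hq : ∀ u, q u ≠ 0) :
    ∫ u, f u / (q u * c) * q u ∂μ = (∫ u, f u ∂μ) / c := by
  rw [← integral_div]
  congr 1 with u
  rw [mul_comm (q u) c, ← div_div, div_mul_cancel₀ _ (hq u)]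

theorem Finset.sum_mul_pos_of_pos_of_sum_ne_zero {ι : Type*} (s : Finset ι) (w π : ι → ℝ)
    (hw : ∀ i ∈ s, 0 < w i) (hπ0 : ∀ i ∈ s, 0 ≤ π i) (hπ : ∑ i ∈ s, π i ≠ 0) :
    0 < ∑ i ∈ s, w i * π i := by
  obtain ⟨i, hi, hπi⟩ := exists_ne_zero_of_sum_ne_zero hπ
  exact sum_pos' (fun j hj => mul_nonneg (hw j hj).le (hπ0 j hj))
    ⟨i, hi, mul_pos (hw i hi) ((hπ0 i hi).lt_of_ne' hπi)⟩

theorem Finset.sum_mul_sum_normalized_mul_div {ι K : Type*} [Field K] (s : Finset ι)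
    (w π c : ι → K) (hS : ∑ i ∈ s, w i * π i ≠ 0) (hw : ∀ j ∈ s, w j ≠ 0) :
    (∑ i ∈ s, w i * π i) * ∑ j ∈ s, (w j * π j / ∑ i ∈ s, w i * π i) * (c j / w j)
      = ∑ j ∈ s, c j * π j := by
  rw [mul_sum]
  refine sum_congr rfl fun j hj => ?_
  field_simp [hw j hj]

theorem adpf_one_step_unbiased_general
    {N : ℕ} (x : Fin N → ℝ) (π : Fin N → ℝ)
    (hπ0 : ∀ j, 0 ≤ π j) (hπ1 : ∑ j, π j = 1)
    (g : ℝ → ℝ)              -- first-stage proposal density g(y | x), y fixed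
    (gu : ℝ → ℝ → ℝ)         -- second-stage proposal density g(u | y, x), y fixed
    (p : ℝ → ℝ)              -- observation density p(y | x'), y fixed
    (pu : ℝ → ℝ)             -- disturbance density
    (h : ℝ → ℝ → ℝ)          -- transition x' = h(x, u)
    (hg : ∀ z, 0 < g z) (hgu : ∀ u z, 0 < gu u z) :
    (∑ j, g (x j) * π j) *
        (∑ j, (g (x j) * π j / ∑ i, g (x i) * π i) *
          ∫ u, (p (h (x j) u) * pu u / (gu u (x j) * g (x j))) * gu u (x j))
      = ∑ j, (∫ u, p (h (x j) u) * pu u) * π j := by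
  have hS : ∑ i, g (x i) * π i ≠ 0 :=
    (sum_mul_pos_of_pos_of_sum_ne_zero _ _ _ (fun i _ => hg (x i)) (fun i _ => hπ0 i)
      (by rw [hπ1]; exact one_ne_zero)).ne'
  simp only [integral_div_mul_mul_self _ _ _ _ fun u => (hgu u _).ne']
  exact sum_mul_sum_normalized_mul_div _ _ _ _ hS fun j _ => (hg (x j)).ne'

/-- Conditional unbiasedness of the one-step ADPF weight: if `x̃^k` is drawn from the
resampling distribution with probabilities proportional to `g(y|x^j) π^j`, `u^k` is drawn
from `g(u|y, x̃^k)`, `x'^k = h(x̃^k, u^k)`, and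
`ω^k = p(y|x'^k) p(u^k) / (g(u^k|y, x̃^k) g(y|x̃^k))`, then
`E[(Σ_j g(y|x^j) π^j) ω^k] = Σ_j p(y|x^j) π^j` with `p(y|x) = ∫ p(y|h(x,u)) p(u) du`. -/
theorem adpf_one_step_unbiased
    {N : ℕ} (x : Fin N → ℝ) (π : Fin N → ℝ)
    (hπ0 : ∀ j, 0 ≤ π j) (hπ1 : ∑ j, π j = 1)
    (g : ℝ → ℝ)              -- first-stage proposal density g(y | x), y fixed
    (gu : ℝ → ℝ → ℝ)         -- second-stage proposal density g(u | y, x), y fixed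
    (p : ℝ → ℝ)              -- observation density p(y | x'), y fixed
    (pu : ℝ → ℝ)             -- disturbance density
    (h : ℝ → ℝ → ℝ)          -- transition x' = h(x, u)
    (hg : ∀ z, 0 < g z) (hgu : ∀ u z, 0 < gu u z)
    (hgu1 : ∀ z, ∫ u, gu u z = 1)
    (hp0 : ∀ z, 0 ≤ p z) (hpu0 : ∀ u, 0 ≤ pu u)
    (hint : ∀ j, Integrable (fun u => p (h (x j) u) * pu u)) :
    (∑ j, g (x j) * π j) *
        (∑ j, (g (x j) * π j / ∑ i, g (x i) * π i) *
          ∫ u, (p (h (x j) u) * pu u / (gu u (x j) * g (x j))) * gu u (x j))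
      = ∑ j, (∫ u, p (h (x j) u) * pu u) * π j :=
  adpf_one_step_unbiased_general x π hπ0 hπ1 g gu p pu h hg hgu
end

section
/- In the limit of zero measurement noise (σ_ε → 0) in the model y = φ x + σ_u(u + δu²) + σ_ε ε with ε ~ N(0,1) and prior u ~ N(0,1), the posterior distribution of u given y concentrates on the (at most two) roots u⁽¹⁾, u⁽²⁾ of the quadratic σ_u δ u² + σ_u u + φx - y = 0, with limiting weights proportional to φ(u⁽ⁱ⁾; 0,1)/|σ_u(1 + 2δ u⁽ⁱ⁾)|, where φ(·;0,1) is the standard normal density. -/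
/-!
Write the residual as `y - φx - σ_u(u + δu²) = a (u - u₁)(u - u₂)`. Up to the common factor
`σ_ε⁻¹`, numerator and denominator of the posterior mean are integrals
`σ⁻¹ ∫ f(u) K(a (u - u₁)(u - u₂) / σ) du` against the standard normal kernel `K`. Split the line at
the midpoint of the roots; on the half containing `u₁`, the substitution `u = u₁ + σ v` turns the
kernel argument into `a v (u₁ + σ v - u₂)`, whose last factor stays at least `|u₁ - u₂| / 2` away
from `0`. Dominated convergence then gives the limit `f(u₁) / |a (u₁ - u₂)|`, and
`|a (u₁ - u₂)| = |σ_u (1 + 2δu₁)|` by Vieta's formulas.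
-/

open Filter MeasureTheory Topology ProbabilityTheory

theorem integral_comp_add_mul_of_pos (g : ℝ → ℝ) (p : ℝ) {σ : ℝ} (hσ : 0 < σ) :
    ∫ v, g (p + σ * v) = σ⁻¹ * ∫ u, g u := by
  rw [Measure.integral_comp_mul_left (fun w => g (p + w)), integral_add_left_eq_self,
    abs_inv, abs_of_pos hσ, smul_eq_mul]

theorem abs_mul_comp_mul_mul_le {K f : ℝ → ℝ} (hK0 : ∀ t, 0 ≤ K t)
    (hKmono : ∀ s t, |s| ≤ |t| → K t ≤ K s) {C : ℝ} (hC : ∀ u, |f u| ≤ C) {ρ z : ℝ} (hρ : 0 < ρ)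
    (hz : ρ ≤ |z|) (a u v : ℝ) : |f u * K (a * v * z)| ≤ C * K (a * ρ * v) := by
  rw [abs_mul, abs_of_nonneg (hK0 _)]
  refine mul_le_mul (hC u) (hKmono _ _ ?_) (hK0 _) ((abs_nonneg _).trans (hC u))
  calc |a * ρ * v| = |a| * |v| * ρ := by rw [abs_mul, abs_mul, abs_of_pos hρ]; ring
    _ ≤ |a| * |v| * |z| := by gcongr
    _ = |a * v * z| := by rw [abs_mul, abs_mul]

theorem tendsto_inv_mul_setIntegral_comp_quadratic {K f : ℝ → ℝ} (hK : Continuous K)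
    (hK0 : ∀ t, 0 ≤ K t) (hKmono : ∀ s t, |s| ≤ |t| → K t ≤ K s) (hKi : Integrable K)
    (hf : Continuous f) {C : ℝ} (hC : ∀ u, |f u| ≤ C) {a p q ρ : ℝ} (ha : a ≠ 0) (hρ : 0 < ρ)
    {S : Set ℝ} (hSm : MeasurableSet S) (hS : S ∈ 𝓝 p) (hSq : ∀ u ∈ S, ρ ≤ |u - q|) :
    Tendsto (fun σ => σ⁻¹ * ∫ u in S, f u * K (a * (u - p) * (u - q) / σ)) (𝓝[>] 0)
      (𝓝 (f p / |a * (p - q)| * ∫ t, K t)) := by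
  set F : ℝ → ℝ → ℝ := fun σ v => S.indicator (fun u => f u * K (a * (u - p) * (u - q) / σ))
    (p + σ * v) with hF
  have hF_mem : ∀ {σ v}, σ ≠ 0 → p + σ * v ∈ S →
      F σ v = f (p + σ * v) * K (a * v * (p + σ * v - q)) := by
    intro σ v hσ hv
    simp only [hF, Set.indicator_of_mem hv]
    congr 2
    field_simp
    ring
  have hF_bound : ∀ σ, 0 < σ → ∀ v, ‖F σ v‖ ≤ C * K (a * ρ * v) := by
    intro σ hσ v
    by_cases hv : p + σ * v ∈ S
    · rw [hF_mem hσ.ne' hv, Real.norm_eq_abs]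
      exact abs_mul_comp_mul_mul_le hK0 hKmono hC hρ (hSq _ hv) _ _ _
    · simp only [hF, Set.indicator_of_notMem hv, norm_zero]
      exact mul_nonneg ((abs_nonneg _).trans (hC p)) (hK0 _)
  have hF_lim : ∀ v, Tendsto (fun σ => F σ v) (𝓝[>] 0) (𝓝 (f p * K (a * v * (p - q)))) := by
    intro v
    have hmove : Tendsto (fun σ : ℝ => p + σ * v) (𝓝[>] 0) (𝓝 p) :=
      tendsto_nhdsWithin_of_tendsto_nhds (Continuous.tendsto' (by fun_prop) 0 p (by simp))
    have hcont : Tendsto (fun σ : ℝ => f (p + σ * v) * K (a * v * (p + σ * v - q))) (𝓝[>] 0)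
        (𝓝 (f p * K (a * v * (p - q)))) :=
      tendsto_nhdsWithin_of_tendsto_nhds (Continuous.tendsto' (by fun_prop) 0 _ (by simp))
    refine hcont.congr' ?_
    filter_upwards [self_mem_nhdsWithin, hmove.eventually_mem hS] with σ hσ hv
    exact (hF_mem (ne_of_gt hσ) hv).symm
  have hlim : ∫ v, f p * K (a * v * (p - q)) = f p / |a * (p - q)| * ∫ t, K t := by
    simp_rw [integral_const_mul, mul_right_comm a _ (p - q)]
    rw [Measure.integral_comp_mul_left K, smul_eq_mul, abs_inv]
    ring
  have hdom := tendsto_integral_filter_of_dominated_convergence (F := F) (l := 𝓝[>] (0 : ℝ))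
    (fun v => C * K (a * ρ * v))
    (Eventually.of_forall fun σ => (((hf.mul (hK.comp (by fun_prop))).measurable.indicator
      hSm).comp (by fun_prop : Measurable fun v : ℝ => p + σ * v)).aestronglyMeasurable)
    (eventually_mem_nhdsWithin.mono fun σ hσ => Eventually.of_forall (hF_bound σ hσ))
    ((hKi.comp_mul_left' (mul_ne_zero ha hρ.ne')).const_mul C)
    (Eventually.of_forall hF_lim)
  rw [hlim] at hdom
  refine hdom.congr' ?_
  filter_upwards [self_mem_nhdsWithin] with σ hσ
  rw [← integral_indicator hSm, ← integral_comp_add_mul_of_pos _ p hσ]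

theorem tendsto_inv_mul_integral_comp_quadratic {K f : ℝ → ℝ} (hK : Continuous K)
    (hK0 : ∀ t, 0 ≤ K t) (hKmono : ∀ s t, |s| ≤ |t| → K t ≤ K s) (hKi : Integrable K)
    (hf : Continuous f) (hfi : Integrable f) {C : ℝ} (hC : ∀ u, |f u| ≤ C) {a p q : ℝ}
    (ha : a ≠ 0) (hpq : p ≠ q) :
    Tendsto (fun σ => σ⁻¹ * ∫ u, f u * K (a * (u - p) * (u - q) / σ)) (𝓝[>] 0)
      (𝓝 ((f p / |a * (p - q)| + f q / |a * (q - p)|) * ∫ t, K t)) := by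
  set S : Set ℝ := {u | |u - p| < |u - q|}
  have hSm : MeasurableSet S := measurableSet_lt (by fun_prop) (by fun_prop)
  have hρ : 0 < |p - q| / 2 := by positivity
  have hSp : S ∈ 𝓝 p :=
    (isOpen_lt (by fun_prop) (by fun_prop)).mem_nhds (by simpa [S, sub_eq_zero] using hpq)
  have hScq : Sᶜ ∈ 𝓝 q := by
    have hq : {u : ℝ | |u - q| < |u - p|} ∈ 𝓝 q :=
      (isOpen_lt (by fun_prop) (by fun_prop)).mem_nhds (by simpa [sub_eq_zero, eq_comm] using hpq)
    exact mem_of_superset hq fun u (hu : |u - q| < |u - p|) => not_lt.mpr hu.le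
  have hS_far : ∀ u ∈ S, |p - q| / 2 ≤ |u - q| := fun u (hu : |u - p| < |u - q|) => by
    linarith [abs_sub_le p u q, abs_sub_comm p u]
  have hSc_far : ∀ u ∈ Sᶜ, |q - p| / 2 ≤ |u - p| := fun u hu => by
    have hu : |u - q| ≤ |u - p| := not_lt.mp hu
    linarith [abs_sub_le q u p, abs_sub_comm q u]
  have hint : ∀ σ, Integrable fun u => f u * K (a * (u - p) * (u - q) / σ) := fun σ =>
    hfi.mul_bdd (hK.comp (by fun_prop)).aestronglyMeasurable (Eventually.of_forall fun u => by
      rw [Real.norm_eq_abs, abs_of_nonneg (hK0 _)]; exact hKmono 0 _ (by simp))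
  have hnear_p := tendsto_inv_mul_setIntegral_comp_quadratic hK hK0 hKmono hKi hf hC ha hρ hSm
    hSp hS_far
  have hnear_q := tendsto_inv_mul_setIntegral_comp_quadratic hK hK0 hKmono hKi hf hC ha
    (by rwa [abs_sub_comm]) hSm.compl hScq hSc_far
  simp only [mul_right_comm a (_ - q)] at hnear_q
  rw [add_mul]
  refine (hnear_p.add hnear_q).congr fun σ => ?_
  rw [← mul_add, integral_add_compl hSm (hint σ)]

theorem continuous_gaussianPDFReal (μ : ℝ) (v : NNReal) : Continuous (gaussianPDFReal μ v) := by
  unfold gaussianPDFReal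
  fun_prop

theorem gaussianPDFReal_le_of_abs_sub_le (μ : ℝ) (v : NNReal) {s t : ℝ}
    (h : |s - μ| ≤ |t - μ|) : gaussianPDFReal μ v t ≤ gaussianPDFReal μ v s := by
  have hsq : (s - μ) ^ 2 ≤ (t - μ) ^ 2 := sq_le_sq.mpr h
  unfold gaussianPDFReal
  gcongr _ * Real.exp (-?_ / _)

theorem tendsto_inv_mul_integral_gaussianPDFReal_comp_quadratic {f : ℝ → ℝ} (hf : Continuous f)
    (hfi : Integrable f) {C : ℝ} (hC : ∀ u, |f u| ≤ C) {a p q : ℝ} (ha : a ≠ 0) (hpq : p ≠ q) :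
    Tendsto (fun σ => σ⁻¹ * ∫ u, f u * gaussianPDFReal 0 1 (a * (u - p) * (u - q) / σ))
      (𝓝[>] 0) (𝓝 (f p / |a * (p - q)| + f q / |a * (q - p)|)) := by
  simpa [integral_gaussianPDFReal_eq_one] using
    tendsto_inv_mul_integral_comp_quadratic (continuous_gaussianPDFReal 0 1)
      (gaussianPDFReal_nonneg 0 1) (fun s t h => gaussianPDFReal_le_of_abs_sub_le 0 1 (by simpa))
      (integrable_gaussianPDFReal 0 1) hf hfi hC ha hpq

theorem tendsto_gaussian_posterior_mean_quadratic {m : ℝ → ℝ} (hm : Continuous m) {C : ℝ}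
    (hC : ∀ u, |m u| ≤ C) {a p q : ℝ} (ha : a ≠ 0) (hpq : p ≠ q) :
    Tendsto (fun σ => (∫ u, m u * gaussianPDFReal 0 1 (a * (u - p) * (u - q) / σ) *
        gaussianPDFReal 0 1 u) / ∫ u, gaussianPDFReal 0 1 (a * (u - p) * (u - q) / σ) *
        gaussianPDFReal 0 1 u) (𝓝[>] 0)
      (𝓝 ((gaussianPDFReal 0 1 p / |a * (p - q)| * m p +
          gaussianPDFReal 0 1 q / |a * (q - p)| * m q) /
        (gaussianPDFReal 0 1 p / |a * (p - q)| + gaussianPDFReal 0 1 q / |a * (q - p)|))) := by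
  set K := gaussianPDFReal 0 1
  have hK_le : ∀ u, |K u| ≤ K 0 := fun u => by
    rw [abs_of_nonneg (gaussianPDFReal_nonneg 0 1 u)]
    exact gaussianPDFReal_le_of_abs_sub_le 0 1 (by simp)
  have hnum := tendsto_inv_mul_integral_gaussianPDFReal_comp_quadratic (f := fun u => m u * K u)
    (hm.mul (continuous_gaussianPDFReal 0 1))
    ((integrable_gaussianPDFReal 0 1).bdd_mul hm.aestronglyMeasurable (ae_of_all _ hC))
    (fun u => by
      rw [abs_mul]
      exact mul_le_mul (hC u) (hK_le u) (abs_nonneg _) ((abs_nonneg _).trans (hC 0)))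
    ha hpq
  have hden := tendsto_inv_mul_integral_gaussianPDFReal_comp_quadratic (f := K)
    (continuous_gaussianPDFReal 0 1) (integrable_gaussianPDFReal 0 1) hK_le ha hpq
  have hden_pos : 0 < K p / |a * (p - q)| + K q / |a * (q - p)| := by
    have := gaussianPDFReal_pos 0 1 p one_ne_zero
    have := gaussianPDFReal_pos 0 1 q one_ne_zero
    have := sub_ne_zero.mpr hpq
    have := sub_ne_zero.mpr hpq.symm
    positivity
  convert (hnum.div hden hden_pos.ne').congr' ?_ using 2
  · ring
  filter_upwards [self_mem_nhdsWithin] with σ hσ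
  rw [Pi.div_apply, mul_div_mul_left _ _ (inv_ne_zero (ne_of_gt hσ))]
  congr 1 <;> refine integral_congr_ae (ae_of_all _ fun u => ?_) <;> ring

theorem add_roots_eq_of_quadratic {R : Type*} [CommRing R] [NoZeroDivisors R] {A B c r₁ r₂ : R}
    (h₁ : A * r₁ ^ 2 + B * r₁ + c = 0) (h₂ : A * r₂ ^ 2 + B * r₂ + c = 0) (hne : r₁ ≠ r₂) :
    A * (r₁ + r₂) + B = 0 :=
  (mul_eq_zero.mp (by linear_combination h₁ - h₂)).resolve_left (sub_ne_zero.mpr hne)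

theorem posterior_concentrates_on_two_roots_general
    (φ x σu δ y : ℝ) (hσu : σu ≠ 0) (hδ : δ ≠ 0)
    (u₁ u₂ : ℝ)
    (h₁ : σu * δ * u₁ ^ 2 + σu * u₁ + φ * x - y = 0)
    (h₂ : σu * δ * u₂ ^ 2 + σu * u₂ + φ * x - y = 0)
    (hne : u₁ ≠ u₂)
    (nd : ℝ → ℝ) (hnd : ∀ t, nd t = Real.exp (-t ^ 2 / 2) / Real.sqrt (2 * Real.pi))
    (w : ℝ → ℝ) (hw : ∀ u, w u = nd u / |σu * (1 + 2 * δ * u)|) :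
    ∀ m : ℝ → ℝ, Continuous m → (∃ C, ∀ u, |m u| ≤ C) →
      Tendsto
        (fun σe : ℝ =>
          (∫ u, m u * nd ((y - φ * x - σu * (u + δ * u ^ 2)) / σe) * nd u) /
            ∫ u, nd ((y - φ * x - σu * (u + δ * u ^ 2)) / σe) * nd u)
        (nhdsWithin 0 (Set.Ioi 0))
        (nhds ((w u₁ * m u₁ + w u₂ * m u₂) / (w u₁ + w u₂))) := by
  rintro m hm ⟨C, hC⟩
  obtain rfl : nd = gaussianPDFReal 0 1 := by
    ext t
    simp [hnd, gaussianPDFReal, div_eq_inv_mul, mul_comm]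
  have hsum : σu * δ * (u₁ + u₂) + σu = 0 :=
    add_roots_eq_of_quadratic (c := φ * x - y) (by linear_combination h₁)
      (by linear_combination h₂) hne
  have hfactor : ∀ u, y - φ * x - σu * (u + δ * u ^ 2) = -(σu * δ) * (u - u₁) * (u - u₂) :=
    fun u => by linear_combination (u₁ - u) * hsum - h₁
  have hw₁ : w u₁ = gaussianPDFReal 0 1 u₁ / |-(σu * δ) * (u₁ - u₂)| := by
    rw [hw, ← abs_neg]
    congr 2
    linear_combination -hsum
  have hw₂ : w u₂ = gaussianPDFReal 0 1 u₂ / |-(σu * δ) * (u₂ - u₁)| := by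
    rw [hw, ← abs_neg]
    congr 2
    linear_combination -hsum
  simp only [hfactor, hw₁, hw₂]
  exact tendsto_gaussian_posterior_mean_quadratic hm hC (neg_ne_zero.mpr (mul_ne_zero hσu hδ)) hne

/-- As `σ_ε → 0⁺`, the posterior distribution of `u` given `y` in the model
`y = φx + σ_u(u + δu²) + σ_ε ε`, `ε ~ N(0,1)`, prior `u ~ N(0,1)`, concentrates on the
two roots `u⁽¹⁾, u⁽²⁾` of `σ_u δ u² + σ_u u + φx - y = 0`, with limiting weights
proportional to `φ(u⁽ⁱ⁾;0,1) / |σ_u (1 + 2δ u⁽ⁱ⁾)|`: posterior expectations of bounded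
continuous functions converge to the corresponding two-point mixture expectations. -/
theorem posterior_concentrates_on_two_roots
    (φ x σu δ y : ℝ) (hσu : σu ≠ 0) (hδ : δ ≠ 0)
    (u₁ u₂ : ℝ)
    (h₁ : σu * δ * u₁ ^ 2 + σu * u₁ + φ * x - y = 0)
    (h₂ : σu * δ * u₂ ^ 2 + σu * u₂ + φ * x - y = 0)
    (hne : u₁ ≠ u₂)
    (hs₁ : 1 + 2 * δ * u₁ ≠ 0) (hs₂ : 1 + 2 * δ * u₂ ≠ 0)
    (nd : ℝ → ℝ) (hnd : ∀ t, nd t = Real.exp (-t ^ 2 / 2) / Real.sqrt (2 * Real.pi))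
    (w : ℝ → ℝ) (hw : ∀ u, w u = nd u / |σu * (1 + 2 * δ * u)|) :
    ∀ m : ℝ → ℝ, Continuous m → (∃ C, ∀ u, |m u| ≤ C) →
      Tendsto
        (fun σe : ℝ =>
          (∫ u, m u * nd ((y - φ * x - σu * (u + δ * u ^ 2)) / σe) * nd u) /
            ∫ u, nd ((y - φ * x - σu * (u + δ * u ^ 2)) / σe) * nd u)
        (nhdsWithin 0 (Set.Ioi 0))
        (nhds ((w u₁ * m u₁ + w u₂ * m u₂) / (w u₁ + w u₂))) :=
  posterior_concentrates_on_two_roots_general φ x σu δ y hσu hδ u₁ u₂ h₁ h₂ hne nd hnd w hw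
end

section
/- Let Γ_0 = β̄G/(G^γ - β̄G) and let f(s) = β̄ G^{1-γ} exp(γ(1-φ)s) (1 + v(φs)) for a price-dividend function v satisfying the deterministic fixed point v(s) = β̄ G^{1-γ} exp(γ(1-φ)s)(1 + v(φs)). Then v(0) = Γ_0 and v'(0) = Γ_1 where Γ_1 = (1-φ) G^{γ+1} β̄ γ / ((G^γ - β̄G)(G^γ - φβ̄G)), provided β̄G < G^γ and φβ̄G < G^γ. -/
/-!
Write the fixed-point equation as `v s = c · exp (a s) · (1 + v (φ s))` with
`c = β̄ G^{1-γ} = β̄G / G^γ` and `a = γ(1-φ)`. At `s = 0` it reads `v 0 = c (1 + v 0)`;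
differentiating at `0` gives `v' 0 = c (a (1 + v 0) + φ v' 0)`. The conditions
`β̄G < G^γ` and `φβ̄G < G^γ` say `c < 1` and `cφ < 1`, so both linear equations have
unique solutions, which are `Γ₀` and `Γ₁` after clearing the factor `G^γ`.
-/

open Real

section FixedPoint

variable {c a φ : ℝ} {v : ℝ → ℝ}

theorem fixedPoint_value_zero (hc : c ≠ 1)
    (hfix : ∀ s, v s = c * exp (a * s) * (1 + v (φ * s))) :
    v 0 = c / (1 - c) := by
  have h0 : v 0 = c * (1 + v 0) := by simpa using hfix 0
  rw [eq_div_iff (sub_ne_zero.mpr hc.symm)]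
  linear_combination h0

theorem hasDerivAt_fixedPoint_rhs (hdiff : DifferentiableAt ℝ v 0) :
    HasDerivAt (fun s => c * exp (a * s) * (1 + v (φ * s)))
      (c * (a * (1 + v 0) + φ * deriv v 0)) 0 := by
  have hexp : HasDerivAt (fun s => exp (a * s)) a 0 := by
    simpa using ((hasDerivAt_id (0 : ℝ)).const_mul a).exp
  have hlin : HasDerivAt (fun s => φ * s) φ 0 := by
    simpa using (hasDerivAt_id (0 : ℝ)).const_mul φ
  have hcomp : HasDerivAt (fun s => v (φ * s)) (deriv v 0 * φ) 0 := by
    have hv : HasDerivAt v (deriv v 0) (φ * 0) := by simpa using hdiff.hasDerivAt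
    exact hv.comp 0 hlin
  refine ((hexp.const_mul c).mul (hcomp.const_add 1)).congr_deriv ?_
  simp only [mul_zero, exp_zero]
  ring

theorem fixedPoint_deriv_zero (hc : c ≠ 1) (hcφ : c * φ ≠ 1)
    (hdiff : DifferentiableAt ℝ v 0)
    (hfix : ∀ s, v s = c * exp (a * s) * (1 + v (φ * s))) :
    deriv v 0 = c * a / ((1 - c) * (1 - c * φ)) := by
  have hv : v = fun s => c * exp (a * s) * (1 + v (φ * s)) := funext hfix
  have hd : deriv v 0 = c * (a * (1 + v 0) + φ * deriv v 0) := by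
    conv_lhs => rw [hv]
    exact (hasDerivAt_fixedPoint_rhs hdiff).deriv
  have h1c : 1 - c ≠ 0 := sub_ne_zero.mpr hc.symm
  have h1cφ : 1 - c * φ ≠ 0 := sub_ne_zero.mpr hcφ.symm
  rw [fixedPoint_value_zero hc hfix] at hd
  rw [eq_div_iff (mul_ne_zero h1c h1cφ)]
  field_simp at hd
  linear_combination hd

end FixedPoint

theorem asset_pricing_taylor_coefficients_general
    (β' G γ φ : ℝ) (hG : 0 < G)
    (h1 : β' * G < G ^ γ) (h2 : φ * (β' * G) < G ^ γ)
    (v : ℝ → ℝ) (hdiff : DifferentiableAt ℝ v 0)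
    (hfix : ∀ s, v s = β' * G ^ (1 - γ) * Real.exp (γ * (1 - φ) * s) * (1 + v (φ * s))) :
    v 0 = β' * G / (G ^ γ - β' * G) ∧
      deriv v 0 =
        (1 - φ) * G ^ (γ + 1) * β' * γ /
          ((G ^ γ - β' * G) * (G ^ γ - φ * (β' * G))) := by
  have hA : 0 < G ^ γ := rpow_pos_of_pos hG γ
  have hc : β' * G ^ (1 - γ) = β' * G / G ^ γ := by
    rw [rpow_sub hG, rpow_one, mul_div_assoc]
  have hc1 : β' * G ^ (1 - γ) ≠ 1 := by
    rw [hc]; exact (div_lt_one hA |>.mpr h1).ne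
  have hcφ : β' * G ^ (1 - γ) * φ ≠ 1 := by
    rw [hc, div_mul_eq_mul_div]; exact (div_lt_one hA |>.mpr (by linarith)).ne
  have hden1 : G ^ γ - β' * G ≠ 0 := by linarith
  have hden2 : G ^ γ - φ * (β' * G) ≠ 0 := by linarith
  refine ⟨?_, ?_⟩
  · rw [fixedPoint_value_zero hc1 hfix, hc]
    field_simp
  · rw [fixedPoint_deriv_zero hc1 hcφ hdiff hfix, hc, rpow_add hG, rpow_one]
    field_simp

/-- Deterministic fixed point of the asset pricing Euler equation: if the
price-dividend function `v` satisfies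
`v(s) = β̄ G^{1-γ} exp(γ(1-φ)s)(1 + v(φs))` with `β̄G < G^γ` and `φβ̄G < G^γ`, then
`v(0) = Γ₀ = β̄G/(G^γ - β̄G)` and
`v'(0) = Γ₁ = (1-φ) G^{γ+1} β̄ γ / ((G^γ - β̄G)(G^γ - φβ̄G))`. -/
theorem asset_pricing_taylor_coefficients
    (β' G γ φ : ℝ) (hG : 0 < G) (hβ : 0 < β')
    (h1 : β' * G < G ^ γ) (h2 : φ * (β' * G) < G ^ γ)
    (v : ℝ → ℝ) (hdiff : DifferentiableAt ℝ v 0)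
    (hfix : ∀ s, v s = β' * G ^ (1 - γ) * Real.exp (γ * (1 - φ) * s) * (1 + v (φ * s))) :
    v 0 = β' * G / (G ^ γ - β' * G) ∧
      deriv v 0 =
        (1 - φ) * G ^ (γ + 1) * β' * γ /
          ((G ^ γ - β' * G) * (G ^ γ - φ * (β' * G))) :=
  asset_pricing_taylor_coefficients_general β' G γ φ hG h1 h2 v hdiff hfix
end
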